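/- Gradient increment bound: Let f^i be L^i-Lipschitz-gradient functions, L = max_i L^i, and define q_k = x_k − x* and z_k = ∇f(x_k) − ∇f(x_{k−1}) (with z_0 = 0), where x* is a fixed matrix. Then for any λ ∈ (0,1) and any K ≥ 0, ‖z‖^{λ,K} ≤ L(1 + 1/λ)‖q‖^{λ,K}, where ‖s‖^{λ,K} = max_{k=0,…,K} λ^{-k}‖s_k‖_F. -/

import Mathlib

/-!
Row by row, `‖∇fⁱ(xₖ₊₁ⁱ) - ∇fⁱ(xₖⁱ)‖ ≤ L ‖xₖ₊₁ⁱ - xₖⁱ‖`, so in Frobenius norm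
`‖zₖ₊₁‖ ≤ L ‖xₖ₊₁ - xₖ‖ ≤ L (‖qₖ₊₁‖ + ‖qₖ‖)` by the triangle inequality through `x*`.
Dividing by `λ^(k+1)` bounds `λ^(-(k+1)) ‖zₖ₊₁‖` by `L ‖q‖^{λ,K} + (L / λ) ‖q‖^{λ,K}`.
-/

open scoped BigOperators

/-- Truncated weighted norm of a real sequence: `max_{0≤k≤K} λ^{-k} s_k`. -/
noncomputable def tnorm (s : ℕ → ℝ) (l : ℝ) (K : ℕ) : ℝ :=
  (Finset.range (K + 1)).sup' Finset.nonempty_range_add_one (fun k => s k / l ^ k)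

section tnorm

variable {s : ℕ → ℝ} {l C : ℝ} {K : ℕ}

theorem div_pow_le_tnorm {k : ℕ} (hk : k ≤ K) : s k / l ^ k ≤ tnorm s l K :=
  Finset.le_sup' (fun k => s k / l ^ k) (Finset.mem_range_succ_iff.mpr hk)

theorem tnorm_le (h : ∀ k ≤ K, s k / l ^ k ≤ C) : tnorm s l K ≤ C :=
  Finset.sup'_le _ _ fun k hk => h k (Finset.mem_range_succ_iff.mp hk)

theorem tnorm_nonneg (h : 0 ≤ s 0) : 0 ≤ tnorm s l K := by
  have h0 : s 0 / l ^ 0 ≤ tnorm s l K := div_pow_le_tnorm (Nat.zero_le K)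
  rw [pow_zero, div_one] at h0
  exact h.trans h0

theorem tnorm_zero : tnorm 0 l K = 0 := by
  simp [tnorm]

theorem tnorm_le_of_le_add_prev {z q : ℕ → ℝ} (hC : 0 ≤ C) (hl : 0 < l) (hq : 0 ≤ q 0)
    (hz0 : z 0 = 0) (hz : ∀ k, z (k + 1) ≤ C * (q (k + 1) + q k)) :
    tnorm z l K ≤ C * (1 + 1 / l) * tnorm q l K := by
  have hT := tnorm_nonneg (l := l) (K := K) hq
  refine tnorm_le fun k hk => ?_
  cases k with
  | zero => rw [hz0, zero_div]; positivity
  | succ k =>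
    have hk' : q (k + 1) / l ^ (k + 1) ≤ tnorm q l K := div_pow_le_tnorm hk
    have hk : q k / l ^ k ≤ tnorm q l K := div_pow_le_tnorm (by omega)
    calc z (k + 1) / l ^ (k + 1) ≤ C * (q (k + 1) + q k) / l ^ (k + 1) := by
          gcongr; exact hz k
      _ = C * (q (k + 1) / l ^ (k + 1)) + C * (1 / l) * (q k / l ^ k) := by
          rw [pow_succ]; field_simp
      _ ≤ C * tnorm q l K + C * (1 / l) * tnorm q l K := by gcongr
      _ = C * (1 + 1 / l) * tnorm q l K := by ring

end tnorm

section RowStacked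

variable {ι : Type*} [Fintype ι] {E F : ι → Type*} [∀ i, SeminormedAddCommGroup (E i)]
  [∀ i, SeminormedAddCommGroup (F i)]

theorem sqrt_sum_norm_sub_sq_eq_dist (a b : ∀ i, E i) :
    √(∑ i, ‖a i - b i‖ ^ 2) = dist (WithLp.toLp 2 a) (WithLp.toLp 2 b) := by
  rw [PiLp.dist_eq_of_L2]
  simp [dist_eq_norm]

theorem sqrt_sum_norm_sub_sq_le_add (a b c : ∀ i, E i) :
    √(∑ i, ‖a i - b i‖ ^ 2) ≤ √(∑ i, ‖a i - c i‖ ^ 2) + √(∑ i, ‖b i - c i‖ ^ 2) := by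
  simp only [sqrt_sum_norm_sub_sq_eq_dist]
  exact dist_triangle_right _ _ _

theorem sqrt_sum_norm_map_sub_sq_le (f : ∀ i, E i → F i) {L : ℝ} (hL : 0 ≤ L)
    (hf : ∀ i u v, ‖f i u - f i v‖ ≤ L * ‖u - v‖) (a b : ∀ i, E i) :
    √(∑ i, ‖f i (a i) - f i (b i)‖ ^ 2) ≤ L * √(∑ i, ‖a i - b i‖ ^ 2) :=
  calc √(∑ i, ‖f i (a i) - f i (b i)‖ ^ 2) ≤ √(∑ i, (L * ‖a i - b i‖) ^ 2) := by
        gcongr with i; exact hf i _ _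
    _ = L * √(∑ i, ‖a i - b i‖ ^ 2) := by
        simp_rw [mul_pow, ← Finset.mul_sum, Real.sqrt_mul (sq_nonneg L), Real.sqrt_sq hL]

end RowStacked

theorem gradient_increment_bound_general {n p : ℕ}
    (g : Fin n → EuclideanSpace ℝ (Fin p) → EuclideanSpace ℝ (Fin p))
    (Li : Fin n → ℝ) (L : ℝ)
    (hLi : ∀ i, 0 ≤ Li i) (hL : ∀ i, Li i ≤ L)
    (hlip : ∀ i x y, ‖g i x - g i y‖ ≤ Li i * ‖x - y‖)
    (x : ℕ → Fin n → EuclideanSpace ℝ (Fin p))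
    (xstar : Fin n → EuclideanSpace ℝ (Fin p))
    (q z : ℕ → ℝ)
    (hq : ∀ k, q k = Real.sqrt (∑ i, ‖x k i - xstar i‖ ^ 2))
    (hz0 : z 0 = 0)
    (hz : ∀ k, z (k + 1) = Real.sqrt (∑ i, ‖g i (x (k + 1) i) - g i (x k i)‖ ^ 2))
    (l : ℝ) (hl0 : 0 < l) (K : ℕ) :
    tnorm z l K ≤ L * (1 + 1 / l) * tnorm q l K := by
  rcases isEmpty_or_nonempty (Fin n) with hn | ⟨⟨i₀⟩⟩
  · have hq0 : q = 0 := funext fun k => by simp [hq]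
    have hz0' : z = 0 := funext fun k => by cases k <;> simp [hz0, hz]
    simp [hq0, hz0', tnorm_zero]
  have hL0 : 0 ≤ L := (hLi i₀).trans (hL i₀)
  have hgL : ∀ i u v, ‖g i u - g i v‖ ≤ L * ‖u - v‖ := fun i u v =>
    (hlip i u v).trans (mul_le_mul_of_nonneg_right (hL i) (norm_nonneg _))
  refine tnorm_le_of_le_add_prev hL0 hl0 (hq 0 ▸ Real.sqrt_nonneg _) hz0 fun k => ?_
  rw [hz, hq, hq]
  calc _ ≤ L * √(∑ i, ‖x (k + 1) i - x k i‖ ^ 2) := sqrt_sum_norm_map_sub_sq_le g hL0 hgL _ _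
    _ ≤ _ := by gcongr; exact sqrt_sum_norm_sub_sq_le_add _ _ _

/-- gradient increment bound `‖z‖^{λ,K} ≤ L (1 + 1/λ) ‖q‖^{λ,K}`,
where `q_k = x_k − x*` and `z_k = ∇f(x_k) − ∇f(x_{k−1})` (rowwise gradients,
Frobenius norms). -/
theorem gradient_increment_bound {n p : ℕ}
    (g : Fin n → EuclideanSpace ℝ (Fin p) → EuclideanSpace ℝ (Fin p))
    (Li : Fin n → ℝ) (L : ℝ)
    (hLi : ∀ i, 0 ≤ Li i) (hL : ∀ i, Li i ≤ L)
    (hlip : ∀ i x y, ‖g i x - g i y‖ ≤ Li i * ‖x - y‖)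
    (x : ℕ → Fin n → EuclideanSpace ℝ (Fin p))
    (xstar : Fin n → EuclideanSpace ℝ (Fin p))
    (q z : ℕ → ℝ)
    (hq : ∀ k, q k = Real.sqrt (∑ i, ‖x k i - xstar i‖ ^ 2))
    (hz0 : z 0 = 0)
    (hz : ∀ k, z (k + 1) = Real.sqrt (∑ i, ‖g i (x (k + 1) i) - g i (x k i)‖ ^ 2))
    (l : ℝ) (hl0 : 0 < l) (hl1 : l < 1) (K : ℕ) :
    tnorm z l K ≤ L * (1 + 1 / l) * tnorm q l K :=
  gradient_increment_bound_general g Li L hLi hL hlip x xstar q z hq hz0 hz l hl0 K
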